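/- (Principle (*^π).) For all assertions A, B, all p-heaps a, b with disjoint domains, and every permission π, letting g = (π·a) ∘ (π·b) (which is defined since π·a and π·b have disjoint domains), the assertions ⌈g⌉((⌈a⌉A ⋆ ⌈b⌉B)^π) and ⌈π·a⌉(A^π) ⋆ ⌈π·b⌉(B^π) are equivalent: each entails the other. -/
import Mathlib


/-- Boyland fractional permissions: rationals in (0, 1]. -/
abbrev Perm : Type := {q : ℚ // 0 < q ∧ q ≤ 1}

/-- A p-heap: partial map from locations to value-permission pairs. -/
abbrev PHeap (Loc Val : Type) : Type := Loc → Option (Val × Perm)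

/-- Domain of a p-heap. -/
def pdom {Loc Val : Type} (h : PHeap Loc Val) : Set Loc := {l | h l ≠ none}

/-- Two p-heaps are disjoint if their domains do not intersect. -/
def pdisjoint {Loc Val : Type} (h₁ h₂ : PHeap Loc Val) : Prop :=
  pdom h₁ ∩ pdom h₂ = ∅

/-- Two p-heaps are compatible if they agree on values on the overlap and
the permissions add up to at most 1. -/
def pcompatible {Loc Val : Type} (h₁ h₂ : PHeap Loc Val) : Prop :=
  ∀ l v₁ π₁ v₂ π₂, h₁ l = some (v₁, π₁) → h₂ l = some (v₂, π₂) →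
    v₁ = v₂ ∧ π₁.1 + π₂.1 ≤ 1

/-- Strong composition: union of disjoint heaps (meaningful when disjoint). -/
def sComp {Loc Val : Type} (h₁ h₂ : PHeap Loc Val) : PHeap Loc Val :=
  fun l => (h₁ l).orElse (fun _ => h₂ l)

/-- Weak composition: adds permissions on the overlap (meaningful when compatible). -/
def wComp {Loc Val : Type} (h₁ h₂ : PHeap Loc Val) : PHeap Loc Val :=
  fun l =>
    match h₁ l, h₂ l with
    | some (v, π₁), some (_, π₂) =>
        if h : π₁.1 + π₂.1 ≤ 1 then
          some (v, ⟨π₁.1 + π₂.1, add_pos π₁.2.1 π₂.2.1, h⟩)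
        else none
    | some p, none => some p
    | none, some p => some p
    | none, none => none

/-- Scalar multiplication of a p-heap by a permission. -/
def psmul {Loc Val : Type} (π : Perm) (h : PHeap Loc Val) : PHeap Loc Val :=
  fun l => (h l).map fun vp =>
    (vp.1, ⟨π.1 * vp.2.1, mul_pos π.2.1 vp.2.2.1,
      by nlinarith [π.2.1, π.2.2, vp.2.2.1, vp.2.2.2]⟩)

/-- Entailment between assertions. -/
def entails {Loc Val : Type} (P Q : PHeap Loc Val → Prop) : Prop :=
  ∀ h, P h → Q h

/-- Strong separating conjunction. -/
def star {Loc Val : Type} (P Q : PHeap Loc Val → Prop) : PHeap Loc Val → Prop :=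
  fun h => ∃ h₁ h₂, pdisjoint h₁ h₂ ∧ P h₁ ∧ Q h₂ ∧ h = sComp h₁ h₂

/-- Weak separating conjunction. -/
def wstar {Loc Val : Type} (P Q : PHeap Loc Val → Prop) : PHeap Loc Val → Prop :=
  fun h => ∃ h₁ h₂, pcompatible h₁ h₂ ∧ P h₁ ∧ Q h₂ ∧ h = wComp h₁ h₂

/-- Labeled assertion ⌈a⌉P : the heap is exactly `a` and `P` holds of it. -/
def lbl {Loc Val : Type} (a : PHeap Loc Val) (P : PHeap Loc Val → Prop) :
    PHeap Loc Val → Prop :=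
  fun h => h = a ∧ P a

/-- Permission-scaled assertion P^π. -/
def ppow {Loc Val : Type} (P : PHeap Loc Val → Prop) (π : Perm) :
    PHeap Loc Val → Prop :=
  fun h => ∃ h', P h' ∧ h = psmul π h'

lemma pdom_psmul {Loc Val : Type} (π : Perm) (h : PHeap Loc Val) :
    pdom (psmul π h) = pdom h := by
  ext l
  simp [pdom, psmul]

lemma psmul_inj {Loc Val : Type} (π : Perm) {h₁ h₂ : PHeap Loc Val}
    (e : psmul π h₁ = psmul π h₂) : h₁ = h₂ := by
  funext l
  have e' := congrFun e l
  simp only [psmul] at e'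
  cases h1 : h₁ l with
  | none => cases h2 : h₂ l with
    | none => rfl
    | some p => simp [h1, h2] at e'
  | some p => cases h2 : h₂ l with
    | none => simp [h1, h2] at e'
    | some q =>
      simp [h1, h2] at e'
      obtain ⟨ev, ep⟩ := e'
      have : p.2 = q.2 := Subtype.ext (ep.resolve_right (ne_of_gt π.2.1))
      exact congrArg some (Prod.ext ev this)

lemma psmul_sComp {Loc Val : Type} (π : Perm) (h₁ h₂ : PHeap Loc Val) :
    psmul π (sComp h₁ h₂) = sComp (psmul π h₁) (psmul π h₂) := by
  funext l
  cases h1 : h₁ l <;> simp [psmul, sComp, h1, Option.orElse]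

theorem star_pi_principle {Loc Val : Type}
    (A B : PHeap Loc Val → Prop) (a b : PHeap Loc Val)
    (hdisj : pdisjoint a b) (π : Perm) :
    entails (lbl (sComp (psmul π a) (psmul π b)) (ppow (star (lbl a A) (lbl b B)) π))
      (star (lbl (psmul π a) (ppow A π)) (lbl (psmul π b) (ppow B π))) ∧
    entails (star (lbl (psmul π a) (ppow A π)) (lbl (psmul π b) (ppow B π)))
      (lbl (sComp (psmul π a) (psmul π b)) (ppow (star (lbl a A) (lbl b B)) π)) := by
  have hdisj' : pdisjoint (psmul π a) (psmul π b) := by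
    unfold pdisjoint at *
    rw [pdom_psmul, pdom_psmul]
    exact hdisj
  constructor
  · rintro h ⟨rfl, h', ⟨h₁, h₂, _, ⟨e₁, hA⟩, ⟨e₂, hB⟩, rfl⟩, _⟩
    exact ⟨psmul π a, psmul π b, hdisj', ⟨rfl, a, hA, rfl⟩, ⟨rfl, b, hB, rfl⟩, rfl⟩
  · rintro h ⟨h₁, h₂, _, ⟨rfl, a', hA, ha'⟩, ⟨rfl, b', hB, hb'⟩, rfl⟩
    refine ⟨rfl, sComp a b, ⟨a, b, hdisj, ⟨rfl, ?_⟩, ⟨rfl, ?_⟩, rfl⟩, (psmul_sComp π a b).symm⟩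
    · rwa [psmul_inj π ha']
    · rwa [psmul_inj π hb']
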